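/- In the abstract setting (X a σ-finite measure space, A self-adjoint on L²(X), 2<q<∞ fixed, resolvents consistently extended to L^{q′}(X)→L²(X) and L^{q′}(X)→L^q(X)): there is an absolute constant C such that for all 0<ε≤λ, ‖Π_{[0,2λ]}(A²−(λ+iε)²)^{-1}‖_{L^{q′}→L²} ≤ C (ελ)^{-1} S_ε and ‖Π_{[0,2λ]}(A²−(λ+iε)²)^{-1}‖_{L^{q′}→L^q} ≤ C (ελ)^{-1} ln⟨λ/ε⟩ · S_ε², where S_ε := sup{ ‖Π_{[εk,ε(k+1)]}‖_{L^{q′}→L²} : k∈ℤ, 0≤k≤2λ/ε }. -/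

import Mathlib

open MeasureTheory Complex Set

noncomputable section

/-- The Japanese bracket `⟨x⟩ = 2 + |x|`. -/
def jb (x : ℝ) : ℝ := 2 + |x|

/-- The Hölder conjugate exponent `q' = q/(q-1)`. -/
def conjExp (q : ℝ) : ℝ := q / (q - 1)

/-- `σ(q) = min( n(1/2−1/q)−1/2 , ((n−1)/2)(1/2−1/q) )`. -/
def sigmaExp (n : ℕ) (q : ℝ) : ℝ :=
  min ((n : ℝ) * (1 / 2 - 1 / q) - 1 / 2) (((n : ℝ) - 1) / 2 * (1 / 2 - 1 / q))

/-- The admissible range of exponents: `2 ≤ q ≤ 2n/(n−2)` if `n ≥ 3`, `2 ≤ q < ∞` if `n = 2`. -/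
def qRange (n : ℕ) (q : ℝ) : Prop :=
  2 ≤ q ∧ (3 ≤ n → q ≤ 2 * n / ((n : ℝ) - 2))

variable {X : Type*} [MeasurableSpace X]

/-- `OpNormLE μ T p r C` : the operator `T`, defined on `L²(μ)`, satisfies
`‖T f‖_{L^r} ≤ C ‖f‖_{L^p}` for every `f ∈ L²(μ)`; equivalently (by density), `T`
extends from `L² ∩ L^p` to a bounded operator `L^p(μ) → L^r(μ)` of norm at most `C`. -/
def OpNormLE (μ : Measure X) (T : Lp ℂ 2 μ →L[ℂ] Lp ℂ 2 μ) (p r C : ℝ) : Prop :=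
  ∀ f : Lp ℂ 2 μ,
    eLpNorm (⇑(T f)) (ENNReal.ofReal r) μ ≤
      ENNReal.ofReal C * eLpNorm (⇑f) (ENNReal.ofReal p) μ

/-- An abstract Borel functional calculus on `L²(μ)`, i.e. the assignment `m ↦ m(A)`
given by the spectral theorem for a self-adjoint operator `A` on `L²(μ)`. -/
structure BorelFC (μ : Measure X) where
  fc : (ℝ → ℂ) → (Lp ℂ 2 μ →L[ℂ] Lp ℂ 2 μ)
  fc_add : ∀ m₁ m₂ : ℝ → ℂ, fc (fun t => m₁ t + m₂ t) = fc m₁ + fc m₂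
  fc_smul : ∀ (c : ℂ) (m : ℝ → ℂ), fc (fun t => c * m t) = c • fc m
  fc_mul : ∀ m₁ m₂ : ℝ → ℂ, fc (fun t => m₁ t * m₂ t) = (fc m₁).comp (fc m₂)
  fc_one : fc (fun _ => 1) = ContinuousLinearMap.id ℂ (Lp ℂ 2 μ)
  fc_norm_le : ∀ (m : ℝ → ℂ) (C : ℝ), (∀ t, ‖m t‖ ≤ C) → ‖fc m‖ ≤ C
  fc_star : ∀ m : ℝ → ℂ,
    fc (fun t => (starRingEnd ℂ) (m t)) = ContinuousLinearMap.adjoint (fc m)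

namespace BorelFC

variable {μ : Measure X} (F : BorelFC μ)

/-- The spectral projection `Π_{[a,b]} = 1_{[a,b]}(A)`. -/
def proj (a b : ℝ) : Lp ℂ 2 μ →L[ℂ] Lp ℂ 2 μ :=
  F.fc (Set.indicator (Set.Icc a b) fun _ => (1 : ℂ))

/-- The resolvent `(A² − z)⁻¹` of `A²`, via the functional calculus of `A`. -/
def res2 (z : ℂ) : Lp ℂ 2 μ →L[ℂ] Lp ℂ 2 μ :=
  F.fc fun t => (((t : ℂ)) ^ 2 - z)⁻¹

/-- If `F` is the functional calculus of `A = √(−Δ_g)`, this is the resolvent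
`(Δ_g + z)⁻¹ = (z − A²)⁻¹`. -/
def resLap (z : ℂ) : Lp ℂ 2 μ →L[ℂ] Lp ℂ 2 μ :=
  F.fc fun t => (z - ((t : ℂ)) ^ 2)⁻¹

end BorelFC

/-- The imaginary part `Im T = (T − T^*)/(2i)` of an operator on `L²(μ)`. -/
def imOp {μ : Measure X} (T : Lp ℂ 2 μ →L[ℂ] Lp ℂ 2 μ) : Lp ℂ 2 μ →L[ℂ] Lp ℂ 2 μ :=
  ((2 * Complex.I)⁻¹) • (T - ContinuousLinearMap.adjoint T)

/-- The resolvents `(A−z)⁻¹`, `z ∈ ℂ∖ℝ`, of the self-adjoint operator `A` underlying the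
functional calculus `F` admit consistent bounded extensions `L^{q′} → L²` and
`L^{q′} → L^q`. -/
def ResolventExtends {μ : Measure X} (F : BorelFC μ) (q : ℝ) : Prop :=
  ∀ z : ℂ, z.im ≠ 0 →
    (∃ C : ℝ, OpNormLE μ (F.fc fun t => ((t : ℂ) - z)⁻¹) (conjExp q) 2 C) ∧
    (∃ C : ℝ, OpNormLE μ (F.fc fun t => ((t : ℂ) - z)⁻¹) (conjExp q) q C)

/-!
Write `Π_{[0,2λ]}(A² − (λ+iε)²)⁻¹ = m(A)` and cut `m` along the windows `[εk, ε(k+1))`,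
`0 ≤ k ≤ 2λ/ε`. On the `k`-th window `|m| ≲ (ελ)⁻¹ (1 + |k − λ/ε|)⁻¹`, and the `k`-th piece
`m_k(A)` factors through `Π_k = Π_{[εk,ε(k+1)]}` on both sides.

For `L^{q'} → L²` the pieces are orthogonal, so `‖m(A)f‖₂² = ∑ ‖m_k(A)f‖₂²`, and the weights
are square summable. For `L^{q'} → L^q`, `Π_k` is self-adjoint, hence bounded `L² → L^q` with
norm `≤ S_ε` by duality; the triangle inequality then costs the harmonic sum of the weights,
which is `≲ ln⟨λ/ε⟩`.
-/

open Filter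
open scoped ENNReal ComplexConjugate

variable {μ : Measure X}

theorem Nat.cast_dist (k c : ℕ) : (Nat.dist k c : ℝ) = |(k : ℝ) - c| := by
  rcases le_total k c with h | h
  · rw [Nat.dist_eq_sub_of_le h, Nat.cast_sub h, abs_sub_comm, abs_of_nonneg (by simpa using h)]
  · rw [Nat.dist_eq_sub_of_le_right h, Nat.cast_sub h, abs_of_nonneg (by simpa using h)]

-- each value `j` is taken by `Nat.dist · c` at most twice, at `c + j` and `c - j`
theorem sum_range_comp_dist_le {G : ℕ → ℝ} (hG : ∀ j, 0 ≤ G j) {c n : ℕ} (hc : c < n) :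
    ∑ k ∈ Finset.range n, G (Nat.dist k c) ≤ 2 * ∑ j ∈ Finset.range n, G j := by
  classical
  rw [Finset.sum_comp, Finset.mul_sum]
  have hfiber (j : ℕ) : (Finset.range n |>.filter (Nat.dist · c = j)).card ≤ 2 := by
    refine (Finset.card_le_card fun k hk => ?_).trans (Finset.card_le_two (a := c + j) (b := c - j))
    have := (Finset.mem_filter.mp hk).2
    unfold Nat.dist at this
    simp only [Finset.mem_insert, Finset.mem_singleton]
    omega
  calc ∑ j ∈ (Finset.range n).image (Nat.dist · c),
        (Finset.range n |>.filter (Nat.dist · c = j)).card • G j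
      ≤ ∑ j ∈ (Finset.range n).image (Nat.dist · c), 2 * G j := by
        gcongr with j
        rw [nsmul_eq_mul]
        exact mul_le_mul_of_nonneg_right (by exact_mod_cast hfiber j) (hG j)
    _ ≤ ∑ j ∈ Finset.range n, 2 * G j := by
        refine Finset.sum_le_sum_of_subset_of_nonneg (fun j hj => ?_)
          fun j _ _ => mul_nonneg zero_le_two (hG j)
        simp only [Finset.mem_image, Finset.mem_range, Nat.dist] at hj ⊢
        omega

theorem sum_range_inv_succ_sq_le (n : ℕ) :
    ∑ j ∈ Finset.range n, (((j : ℝ) + 1) ^ 2)⁻¹ ≤ 2 := by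
  have h := sum_Ioo_inv_sq_le (α := ℝ) 0 (n + 1)
  rw [← Finset.Ico_add_one_left_eq_Ioo, ← Finset.sum_Ico_add' (c := 1)] at h
  simpa [← Finset.range_eq_Ico] using h

theorem sum_range_inv_succ_le (n : ℕ) :
    ∑ j ∈ Finset.range n, ((j : ℝ) + 1)⁻¹ ≤ 1 + Real.log n := by
  simpa [harmonic] using harmonic_le_one_add_log n

theorem sum_range_inv_dist_add_one_sq_le {c n : ℕ} (hc : c < n) :
    ∑ k ∈ Finset.range n, (((Nat.dist k c : ℝ) + 1)⁻¹) ^ 2 ≤ 4 := by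
  have := sum_range_inv_succ_sq_le n
  simp only [← inv_pow] at this
  linarith [sum_range_comp_dist_le (G := fun j => (((j : ℝ) + 1)⁻¹) ^ 2)
    (fun j => by positivity) hc]

theorem sum_range_inv_dist_add_one_le {c n : ℕ} (hc : c < n) :
    ∑ k ∈ Finset.range n, ((Nat.dist k c : ℝ) + 1)⁻¹ ≤ 2 * (1 + Real.log n) := by
  linarith [sum_range_inv_succ_le n,
    sum_range_comp_dist_le (G := fun j => ((j : ℝ) + 1)⁻¹) (fun j => by positivity) hc]

theorem one_add_log_natFloor_le {r : ℝ} (hr : 1 ≤ r) :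
    1 + Real.log ((⌊2 * r⌋₊ + 1 : ℕ) : ℝ) ≤ 3 * Real.log (2 + r) := by
  have hone : 1 ≤ Real.log (2 + r) :=
    (Real.le_log_iff_exp_le (by positivity)).mpr (by linarith [Real.exp_one_lt_d9])
  have hfloor : ((⌊2 * r⌋₊ + 1 : ℕ) : ℝ) ≤ (2 + r) ^ 2 := by
    push_cast
    nlinarith [Nat.floor_le (by positivity : (0 : ℝ) ≤ 2 * r)]
  have := Real.log_le_log (by positivity) hfloor
  rw [Real.log_pow] at this
  push_cast at this ⊢
  linarith

theorem Nat.floor_le_floor_two_mul (x : ℝ) : ⌊x⌋₊ ≤ ⌊2 * x⌋₊ := by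
  rcases le_or_gt 0 x with hx | hx
  · exact Nat.floor_le_floor (by linarith)
  · simp [Nat.floor_of_nonpos hx.le]

theorem mem_Icc_mul_floor_div {ε t : ℝ} (hε : 0 < ε) (ht : 0 ≤ t) :
    t ∈ Icc (ε * ⌊t / ε⌋₊) (ε * (⌊t / ε⌋₊ + 1)) := by
  constructor
  · rw [← le_div_iff₀' hε]
    exact Nat.floor_le (div_nonneg ht hε.le)
  · rw [← div_le_iff₀' hε]
    exact (Nat.lt_floor_add_one _).le

theorem dist_floor_div_le {ε s t : ℝ} (hε : 0 < ε) (hs : 0 ≤ s) (ht : 0 ≤ t) :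
    ε * Nat.dist ⌊t / ε⌋₊ ⌊s / ε⌋₊ ≤ |t - s| + ε := by
  have ht₁ := Nat.floor_le (div_nonneg ht hε.le)
  have ht₂ := Nat.lt_floor_add_one (t / ε)
  have hs₁ := Nat.floor_le (div_nonneg hs hε.le)
  have hs₂ := Nat.lt_floor_add_one (s / ε)
  have hts : |t - s| = ε * |t / ε - s / ε| := by
    rw [← abs_of_pos hε, ← abs_mul, abs_of_pos hε, mul_sub, mul_div_cancel₀ _ hε.ne',
      mul_div_cancel₀ _ hε.ne']
  rw [Nat.cast_dist, hts, ← mul_add_one]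
  gcongr
  rw [abs_le] at *
  constructor <;> cases abs_cases (t / ε - s / ε) <;> linarith

-- `t² - w² = (t - w)(t + w)` with `|t - w| ≥ max(|t - λ|, ε)` and `|t + w| ≥ λ`
theorem norm_inv_sq_sub_sq_le {ε lam t : ℝ} (hε : 0 < ε) (hlam : 0 < lam) (ht : 0 ≤ t) :
    ‖((t : ℂ) ^ 2 - ((lam : ℂ) + ε * I) ^ 2)⁻¹‖ ≤
      3 * (ε * lam)⁻¹ * ((Nat.dist ⌊t / ε⌋₊ ⌊lam / ε⌋₊ : ℝ) + 1)⁻¹ := by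
  set w : ℂ := lam + ε * I
  have hsub : ε * ((Nat.dist ⌊t / ε⌋₊ ⌊lam / ε⌋₊ : ℝ) + 1) ≤ 3 * ‖(t : ℂ) - w‖ := by
    have hre : |t - lam| ≤ ‖(t : ℂ) - w‖ := by
      simpa [w] using abs_re_le_norm ((t : ℂ) - w)
    have him : ε ≤ ‖(t : ℂ) - w‖ := by
      simpa [w, abs_of_pos hε] using abs_im_le_norm ((t : ℂ) - w)
    linarith [dist_floor_div_le hε hlam.le ht]
  have hadd : lam ≤ ‖(t : ℂ) + w‖ := by
    have := re_le_norm ((t : ℂ) + w)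
    simp only [w, add_re, ofReal_re, mul_re, I_re, I_im, ofReal_im] at this
    linarith
  rw [show (t : ℂ) ^ 2 - w ^ 2 = ((t : ℂ) - w) * ((t : ℂ) + w) by ring, norm_inv, norm_mul,
    show 3 * (ε * lam)⁻¹ * ((Nat.dist ⌊t / ε⌋₊ ⌊lam / ε⌋₊ : ℝ) + 1)⁻¹
      = (ε * ((Nat.dist ⌊t / ε⌋₊ ⌊lam / ε⌋₊ : ℝ) + 1) / 3 * lam)⁻¹ by field_simp]
  gcongr
  linarith

theorem ENNReal.rpow_inv_le_of_le_mul_rpow_inv {p q : ℝ} (hpq : p.HolderConjugate q)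
    {I M : ℝ≥0∞} (hI : I ≠ ⊤) (h : I ≤ M * I ^ q⁻¹) : I ^ p⁻¹ ≤ M := by
  rcases eq_or_ne I 0 with rfl | hI₀
  · simp [ENNReal.zero_rpow_of_pos hpq.inv_pos]
  have hsplit : I = I ^ p⁻¹ * I ^ q⁻¹ := by
    rw [← ENNReal.rpow_add _ _ hI₀ hI, hpq.inv_add_inv_eq_one, ENNReal.rpow_one]
  have h' : I ^ p⁻¹ * I ^ q⁻¹ ≤ M * I ^ q⁻¹ := by rwa [← hsplit]
  exact (ENNReal.mul_le_mul_iff_left (by simp [hI₀, hI])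
    (ENNReal.rpow_ne_top_of_nonneg hpq.symm.inv_pos.le hI)).mp h'

theorem Complex.inner_ofReal_norm_rpow_mul_self (z : ℂ) {p : ℝ} (hp : p ≠ 0) :
    inner ℂ ((‖z‖ ^ (p - 2) : ℝ) * z) z = (‖z‖ ^ p : ℝ) := by
  rcases eq_or_ne z 0 with rfl | hz
  · simp [Real.zero_rpow hp]
  rw [RCLike.inner_apply, map_mul, conj_ofReal, mul_left_comm, mul_conj', ← ofReal_pow,
    ← ofReal_mul, ← Real.rpow_natCast, ← Real.rpow_add (norm_pos_iff.mpr hz)]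
  norm_num

theorem Complex.norm_ofReal_norm_rpow_mul_self (z : ℂ) {p : ℝ} (hp : p ≠ 1) :
    ‖(‖z‖ ^ (p - 2) : ℝ) * z‖ = ‖z‖ ^ (p - 1) := by
  rcases eq_or_ne z 0 with rfl | hz
  · simp [Real.zero_rpow (sub_ne_zero.mpr hp)]
  rw [norm_mul, norm_real, Real.norm_of_nonneg (by positivity)]
  nth_rw 2 [← Real.rpow_one ‖z‖]
  rw [← Real.rpow_add (norm_pos_iff.mpr hz)]
  ring_nf

theorem MeasureTheory.eLpNorm_ofReal_norm_rpow_mul_self {p q : ℝ} (hpq : p.HolderConjugate q)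
    (u : X → ℂ) :
    eLpNorm (fun x => ((‖u x‖ ^ (p - 2) : ℝ) : ℂ) * u x) (ENNReal.ofReal q) μ =
      (∫⁻ x, ‖u x‖ₑ ^ p ∂μ) ^ q⁻¹ := by
  rw [eLpNorm_eq_lintegral_rpow_enorm_toReal (by simp [hpq.symm.pos]) ENNReal.ofReal_ne_top,
    ENNReal.toReal_ofReal hpq.symm.nonneg, one_div]
  congr 1
  refine lintegral_congr fun x => ?_
  rw [← ofReal_norm, ← ofReal_norm, Complex.norm_ofReal_norm_rpow_mul_self _ hpq.lt.ne',
    ENNReal.ofReal_rpow_of_nonneg (by positivity) hpq.symm.nonneg, ← Real.rpow_mul (norm_nonneg _),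
    hpq.sub_one_mul_conj, ENNReal.ofReal_rpow_of_nonneg (norm_nonneg _) hpq.nonneg]

theorem MeasureTheory.L2.enorm_inner_eq_lintegral {G h : Lp ℂ 2 μ} {F : X → ℝ}
    (hF : ∀ᵐ x ∂μ, inner ℂ (G x) (h x) = F x) (hF₀ : ∀ x, 0 ≤ F x) :
    ‖inner ℂ G h‖ₑ = ∫⁻ x, ENNReal.ofReal (F x) ∂μ := by
  have hint : Integrable F μ := by
    refine (L2.integrable_inner (𝕜 := ℂ) G h).re.congr ?_
    filter_upwards [hF] with x hx
    rw [hx]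
    exact Complex.ofReal_re _
  have : inner ℂ G h = ((∫ x, F x ∂μ : ℝ) : ℂ) := by
    rw [L2.inner_def, ← integral_complex_ofReal]
    exact integral_congr_ae hF
  rw [this, ← ofReal_norm, Complex.norm_real, Real.norm_of_nonneg (integral_nonneg hF₀),
    ofReal_integral_eq_lintegral_ofReal hint (ae_of_all _ hF₀)]

theorem MeasureTheory.Lp.measure_norm_preimage_Icc_lt_top (h : Lp ℂ 2 μ) {δ : ℝ} (hδ : 0 < δ)
    (R : ℝ) : μ ((‖h ·‖) ⁻¹' Icc δ R) < ⊤ := by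
  refine (measure_mono fun x hx => ?_).trans_lt
    ((Lp.memLp h).meas_ge_lt_top two_ne_zero ENNReal.ofNat_ne_top (Real.toNNReal_pos.mpr hδ).ne')
  exact Real.toNNReal_le_iff_le_coe.mpr hx.1

-- `h` is tested against `|u|^{p-2} u` for its truncation `u`, which pairs with `h` to `∫ |u|^p`
theorem MeasureTheory.Lp.eLpNorm_indicator_le_of_forall_enorm_inner_le {p q : ℝ}
    (hpq : p.HolderConjugate q) (h : Lp ℂ 2 μ) {M : ℝ≥0∞}
    (H : ∀ g : Lp ℂ 2 μ, ‖inner ℂ g h‖ₑ ≤ M * eLpNorm g (ENNReal.ofReal q) μ)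
    {δ : ℝ} (hδ : 0 < δ) (R : ℝ) :
    eLpNorm (((‖h ·‖) ⁻¹' Icc δ R).indicator h) (ENNReal.ofReal p) μ ≤ M := by
  set S := (‖h ·‖) ⁻¹' Icc δ R
  have hSm : MeasurableSet S := (Lp.stronglyMeasurable h).norm.measurable measurableSet_Icc
  set u := S.indicator h
  have hum : AEStronglyMeasurable u μ := (Lp.aestronglyMeasurable h).indicator hSm
  set g : X → ℂ := fun x => (‖u x‖ ^ (p - 2) : ℝ) * u x
  have hg : MemLp g 2 μ := by
    refine MemLp.of_le (memLp_indicator_const 2 hSm (R ^ (p - 1))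
      (Or.inr (Lp.measure_norm_preimage_Icc_lt_top h hδ R).ne))
      ((continuous_ofReal.comp_aestronglyMeasurable
        (hum.norm.aemeasurable.pow_const _).aestronglyMeasurable).mul hum)
      (ae_of_all _ fun x => ?_)
    by_cases hx : x ∈ S
    · simp only [g, u, indicator_of_mem hx, Complex.norm_ofReal_norm_rpow_mul_self _ hpq.lt.ne']
      rw [Real.norm_of_nonneg (Real.rpow_nonneg (hδ.le.trans (hx.1.trans hx.2)) _)]
      exact Real.rpow_le_rpow (norm_nonneg _) hx.2 hpq.sub_one_pos.le
    · simp [g, u, indicator_of_notMem hx]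
  have hpoint (x : X) : inner ℂ (g x) (h x) = (‖u x‖ ^ p : ℝ) := by
    by_cases hx : x ∈ S
    · simp only [g, u, indicator_of_mem hx]
      exact Complex.inner_ofReal_norm_rpow_mul_self _ hpq.ne_zero
    · simp [g, u, indicator_of_notMem hx, Real.zero_rpow hpq.ne_zero]
  have hinner : ‖inner ℂ (hg.toLp g) h‖ₑ = ∫⁻ x, ‖u x‖ₑ ^ p ∂μ := by
    rw [L2.enorm_inner_eq_lintegral (hg.coeFn_toLp.mono fun x hx => by rw [hx, hpoint])
      fun x => by positivity]
    refine lintegral_congr fun x => ?_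
    rw [← ofReal_norm, ENNReal.ofReal_rpow_of_nonneg (norm_nonneg _) hpq.nonneg]
  rw [eLpNorm_eq_lintegral_rpow_enorm_toReal (by simp [hpq.pos]) ENNReal.ofReal_ne_top,
    ENNReal.toReal_ofReal hpq.nonneg, one_div]
  refine ENNReal.rpow_inv_le_of_le_mul_rpow_inv hpq (hinner ▸ enorm_ne_top) ?_
  have hG : eLpNorm g (ENNReal.ofReal q) μ = (∫⁻ x, ‖u x‖ₑ ^ p ∂μ) ^ q⁻¹ :=
    eLpNorm_ofReal_norm_rpow_mul_self hpq u
  simpa only [hinner, eLpNorm_congr_ae hg.coeFn_toLp, hG] using H (hg.toLp g)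

theorem MeasureTheory.Lp.eLpNorm_le_of_forall_enorm_inner_le {p q : ℝ}
    (hpq : p.HolderConjugate q) (h : Lp ℂ 2 μ) {M : ℝ≥0∞}
    (H : ∀ g : Lp ℂ 2 μ, ‖inner ℂ g h‖ₑ ≤ M * eLpNorm g (ENNReal.ofReal q) μ) :
    eLpNorm h (ENNReal.ofReal p) μ ≤ M := by
  refine eLpNorm_le_of_ae_tendsto (u := atTop)
    (Eventually.of_forall fun n : ℕ =>
      Lp.eLpNorm_indicator_le_of_forall_enorm_inner_le hpq h H (δ := ((n : ℝ) + 1)⁻¹)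
        (by positivity) ((n : ℝ) + 1))
    (fun n => (Lp.aestronglyMeasurable h).indicator
      ((Lp.stronglyMeasurable h).norm.measurable measurableSet_Icc))
    (ae_of_all _ fun x => tendsto_const_nhds.congr' ?_)
  rcases eq_or_ne (h x) 0 with hx | hx
  · exact Eventually.of_forall fun n => hx ▸ (indicator_apply_eq_zero.mpr fun _ => hx).symm
  have hpos : 0 < ‖h x‖ := norm_pos_iff.mpr hx
  filter_upwards [tendsto_natCast_atTop_atTop.eventually_ge_atTop ‖h x‖⁻¹,
    tendsto_natCast_atTop_atTop.eventually_ge_atTop ‖h x‖] with n hn₁ hn₂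
  rw [indicator_of_mem]
  exact ⟨inv_le_of_inv_le₀ hpos (by linarith), by linarith⟩

theorem MeasureTheory.Lp.eLpNorm_sum_le {ι : Type*} {p r : ℝ≥0∞} (hr : 1 ≤ r) (s : Finset ι)
    (v : ι → Lp ℂ p μ) : eLpNorm (⇑(∑ i ∈ s, v i)) r μ ≤ ∑ i ∈ s, eLpNorm (v i) r μ := by
  classical
  induction s using Finset.induction_on with
  | empty =>
    rw [Finset.sum_empty, Finset.sum_empty, eLpNorm_congr_ae (Lp.coeFn_zero ℂ p μ), eLpNorm_zero]
  | insert i s hi ih =>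
    rw [Finset.sum_insert hi, Finset.sum_insert hi,
      eLpNorm_congr_ae (Lp.coeFn_add (v i) (∑ j ∈ s, v j))]
    exact (eLpNorm_add_le (Lp.aestronglyMeasurable _) (Lp.aestronglyMeasurable _) hr).trans
      (add_le_add le_rfl ih)

theorem MeasureTheory.Lp.eLpNorm_ofReal_two (u : Lp ℂ 2 μ) :
    eLpNorm u (ENNReal.ofReal 2) μ = ‖u‖ₑ := by
  rw [Lp.enorm_def, ENNReal.ofReal_ofNat]

theorem OpNormLE.mono {T : Lp ℂ 2 μ →L[ℂ] Lp ℂ 2 μ} {p r C C' : ℝ}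
    (hT : OpNormLE μ T p r C) (hC : C ≤ C') : OpNormLE μ T p r C' :=
  fun f => (hT f).trans (by gcongr)

theorem OpNormLE.eLpNorm_adjoint_apply_le {T : Lp ℂ 2 μ →L[ℂ] Lp ℂ 2 μ}
    {q P : ℝ} (hq : 1 < q) (hT : OpNormLE μ T (conjExp q) 2 P) (u : Lp ℂ 2 μ) :
    eLpNorm (ContinuousLinearMap.adjoint T u) (ENNReal.ofReal q) μ ≤ ENNReal.ofReal P * ‖u‖ₑ := by
  refine Lp.eLpNorm_le_of_forall_enorm_inner_le (Real.HolderConjugate.conjExponent hq) _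
    fun g => ?_
  rw [ContinuousLinearMap.adjoint_inner_right]
  calc ‖inner ℂ (T g) u‖ₑ ≤ ‖T g‖ₑ * ‖u‖ₑ := by
        simpa only [enorm, ← ENNReal.coe_mul, ENNReal.coe_le_coe] using nnnorm_inner_le_nnnorm _ _
    _ ≤ ENNReal.ofReal P * eLpNorm g (ENNReal.ofReal (conjExp q)) μ * ‖u‖ₑ := by
        rw [← Lp.eLpNorm_ofReal_two]
        gcongr
        exact hT g
    _ = _ := mul_right_comm _ _ _

section FiberPart

variable {ι : Type*} [DecidableEq ι]

def fiberPart (φ : ℝ → ι) (m : ℝ → ℂ) (k : ι) (t : ℝ) : ℂ :=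
  if φ t = k then m t else 0

variable {s : Finset ι} {φ : ℝ → ι} {a b c : ι → ℝ} {m : ℝ → ℂ}

theorem sum_fiberPart (hm : ∀ t, m t ≠ 0 → φ t ∈ s) (t : ℝ) :
    ∑ k ∈ s, fiberPart φ m k t = m t := by
  simp only [fiberPart, Finset.sum_ite_eq]
  split_ifs with ht
  · rfl
  · by_contra h
    exact ht (hm t (Ne.symm h))

theorem conj_mul_fiberPart (k : ι) (t : ℝ) :
    conj (fiberPart φ m k t) * fiberPart φ m k t =
      fiberPart φ (fun t => conj (m t) * m t) k t := by
  unfold fiberPart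
  split_ifs <;> simp

theorem fiberPart_ne_zero {k : ι} {t : ℝ} (h : fiberPart φ m k t ≠ 0) : φ t = k ∧ m t ≠ 0 := by
  unfold fiberPart at h
  split_ifs at h with hk
  · exact ⟨hk, h⟩
  · exact absurd rfl h

theorem mem_Icc_of_fiberPart_ne_zero (hloc : ∀ t, m t ≠ 0 → t ∈ Icc (a (φ t)) (b (φ t)))
    {k : ι} {t : ℝ} (h : fiberPart φ m k t ≠ 0) : t ∈ Icc (a k) (b k) := by
  obtain ⟨rfl, hm⟩ := fiberPart_ne_zero h
  exact hloc t hm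

theorem norm_fiberPart_le (hbound : ∀ t, ‖m t‖ ≤ c (φ t)) (hc : ∀ k, 0 ≤ c k) (k : ι) (t : ℝ) :
    ‖fiberPart φ m k t‖ ≤ c k := by
  unfold fiberPart
  split_ifs with hk
  · exact hk ▸ hbound t
  · simpa using hc k

end FiberPart

namespace BorelFC

variable (F : BorelFC μ)

theorem fc_zero : F.fc (fun _ => 0) = 0 := by
  simpa using F.fc_smul 0 0

theorem fc_sum {ι : Type*} (s : Finset ι) (m : ι → ℝ → ℂ) :
    F.fc (fun t => ∑ i ∈ s, m i t) = ∑ i ∈ s, F.fc (m i) := by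
  classical
  induction s using Finset.induction_on with
  | empty => simpa using F.fc_zero
  | insert a s ha ih => simp only [Finset.sum_insert ha, F.fc_add, ih]

theorem norm_fc_apply_sq (m : ℝ → ℂ) (f : Lp ℂ 2 μ) :
    ‖F.fc m f‖ ^ 2 = RCLike.re (inner ℂ (F.fc (fun t => conj (m t) * m t) f) f) := by
  rw [F.fc_mul, F.fc_star, ContinuousLinearMap.comp_apply,
    ContinuousLinearMap.adjoint_inner_left, inner_self_eq_norm_sq]

theorem adjoint_proj (a b : ℝ) : ContinuousLinearMap.adjoint (F.proj a b) = F.proj a b := by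
  rw [proj, ← F.fc_star]
  congr 1
  funext t
  by_cases ht : t ∈ Icc a b <;> simp [ht]

theorem fc_eq_proj_comp {m : ℝ → ℂ} {a b : ℝ} (hm : ∀ t, m t ≠ 0 → t ∈ Icc a b) :
    F.fc m = (F.proj a b).comp (F.fc m) := by
  rw [proj, ← F.fc_mul]
  congr 1
  funext t
  by_cases ht : m t = 0 <;> simp_all

theorem fc_eq_comp_proj {m : ℝ → ℂ} {a b : ℝ} (hm : ∀ t, m t ≠ 0 → t ∈ Icc a b) :
    F.fc m = (F.fc m).comp (F.proj a b) := by
  rw [proj, ← F.fc_mul]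
  congr 1
  funext t
  by_cases ht : m t = 0 <;> simp_all

theorem norm_fc_apply_le {m : ℝ → ℂ} {a b c : ℝ} (hm : ∀ t, m t ≠ 0 → t ∈ Icc a b)
    (hc : ∀ t, ‖m t‖ ≤ c) (f : Lp ℂ 2 μ) : ‖F.fc m f‖ ≤ c * ‖F.proj a b f‖ := by
  rw [F.fc_eq_comp_proj hm, ContinuousLinearMap.comp_apply]
  exact (F.fc m).le_of_opNorm_le (F.fc_norm_le m c hc) _

theorem eLpNorm_fc_apply_le {m : ℝ → ℂ} {a b q P : ℝ} (hq : 1 < q)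
    (hm : ∀ t, m t ≠ 0 → t ∈ Icc a b) (hP : OpNormLE μ (F.proj a b) (conjExp q) 2 P)
    (f : Lp ℂ 2 μ) : eLpNorm (F.fc m f) (ENNReal.ofReal q) μ ≤ ENNReal.ofReal P * ‖F.fc m f‖ₑ := by
  have h := hP.eLpNorm_adjoint_apply_le hq (F.fc m f)
  rwa [F.adjoint_proj, ← ContinuousLinearMap.comp_apply, ← F.fc_eq_proj_comp hm] at h

section Cluster

variable {ι : Type*} [DecidableEq ι] {s : Finset ι} {φ : ℝ → ι} {a b c : ι → ℝ} {m : ℝ → ℂ}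

theorem fc_eq_sum_fiberPart (hm : ∀ t, m t ≠ 0 → φ t ∈ s) :
    F.fc m = ∑ k ∈ s, F.fc (fiberPart φ m k) := by
  rw [← F.fc_sum]
  congr 1
  funext t
  exact (sum_fiberPart hm t).symm

theorem norm_fc_apply_sq_eq_sum (hm : ∀ t, m t ≠ 0 → φ t ∈ s) (f : Lp ℂ 2 μ) :
    ‖F.fc m f‖ ^ 2 = ∑ k ∈ s, ‖F.fc (fiberPart φ m k) f‖ ^ 2 := by
  have hm' : ∀ t, conj (m t) * m t ≠ 0 → φ t ∈ s := fun t ht => hm t (right_ne_zero_of_mul ht)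
  simp only [norm_fc_apply_sq, conj_mul_fiberPart, F.fc_eq_sum_fiberPart hm',
    FunLike.coe_sum, Finset.sum_apply, sum_inner, map_sum]

theorem enorm_fc_fiberPart_apply_le {p P : ℝ}
    (hloc : ∀ t, m t ≠ 0 → t ∈ Icc (a (φ t)) (b (φ t))) (hbound : ∀ t, ‖m t‖ ≤ c (φ t))
    (hc : ∀ k, 0 ≤ c k) {k : ι} (hP : OpNormLE μ (F.proj (a k) (b k)) p 2 P) (f : Lp ℂ 2 μ) :
    ‖F.fc (fiberPart φ m k) f‖ₑ ≤
      ENNReal.ofReal (c k) * (ENNReal.ofReal P * eLpNorm f (ENNReal.ofReal p) μ) :=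
  calc ‖F.fc (fiberPart φ m k) f‖ₑ = ENNReal.ofReal ‖F.fc (fiberPart φ m k) f‖ :=
        (ofReal_norm _).symm
    _ ≤ ENNReal.ofReal (c k * ‖F.proj (a k) (b k) f‖) :=
        ENNReal.ofReal_le_ofReal (F.norm_fc_apply_le (fun _ => mem_Icc_of_fiberPart_ne_zero hloc)
          (norm_fiberPart_le hbound hc k) f)
    _ = ENNReal.ofReal (c k) * ‖F.proj (a k) (b k) f‖ₑ := by
        rw [ENNReal.ofReal_mul (hc k), ofReal_norm]
    _ ≤ _ := by
        gcongr
        rw [← Lp.eLpNorm_ofReal_two]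
        exact hP f

-- the fibre parts have disjoint supports, so their contributions are orthogonal in `L²`
theorem opNormLE_two_of_cluster {p P B : ℝ} (hs : ∀ t, m t ≠ 0 → φ t ∈ s)
    (hloc : ∀ t, m t ≠ 0 → t ∈ Icc (a (φ t)) (b (φ t))) (hbound : ∀ t, ‖m t‖ ≤ c (φ t))
    (hc : ∀ k, 0 ≤ c k) (hcluster : ∀ k ∈ s, OpNormLE μ (F.proj (a k) (b k)) p 2 P)
    (hB : ∑ k ∈ s, c k ^ 2 ≤ B ^ 2) (hB₀ : 0 ≤ B) : OpNormLE μ (F.fc m) p 2 (B * P) := by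
  intro f
  set N := eLpNorm f (ENNReal.ofReal p) μ
  rw [Lp.eLpNorm_ofReal_two]
  refine (ENNReal.pow_le_pow_left_iff two_ne_zero).mp ?_
  calc ‖F.fc m f‖ₑ ^ 2 = ∑ k ∈ s, ‖F.fc (fiberPart φ m k) f‖ₑ ^ 2 := by
        simp only [← ofReal_norm, ← ENNReal.ofReal_pow (norm_nonneg _)]
        rw [F.norm_fc_apply_sq_eq_sum hs, ENNReal.ofReal_sum_of_nonneg fun _ _ => by positivity]
    _ ≤ ∑ k ∈ s, (ENNReal.ofReal (c k) * (ENNReal.ofReal P * N)) ^ 2 := by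
        gcongr with k hk
        exact F.enorm_fc_fiberPart_apply_le hloc hbound hc (hcluster k hk) f
    _ = ENNReal.ofReal (∑ k ∈ s, c k ^ 2) * (ENNReal.ofReal P * N) ^ 2 := by
        rw [ENNReal.ofReal_sum_of_nonneg fun _ _ => by positivity, Finset.sum_mul]
        simp only [mul_pow, ENNReal.ofReal_pow (hc _)]
    _ ≤ ENNReal.ofReal (B ^ 2) * (ENNReal.ofReal P * N) ^ 2 := by gcongr
    _ = (ENNReal.ofReal (B * P) * N) ^ 2 := by
        rw [ENNReal.ofReal_mul hB₀, ENNReal.ofReal_pow hB₀]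
        ring

-- each fibre part is localised by its spectral projection, which maps `L²` to `L^q` by duality
theorem opNormLE_of_cluster {q P : ℝ} (hq : 1 < q) (hs : ∀ t, m t ≠ 0 → φ t ∈ s)
    (hloc : ∀ t, m t ≠ 0 → t ∈ Icc (a (φ t)) (b (φ t))) (hbound : ∀ t, ‖m t‖ ≤ c (φ t))
    (hc : ∀ k, 0 ≤ c k) (hP : 0 ≤ P)
    (hcluster : ∀ k ∈ s, OpNormLE μ (F.proj (a k) (b k)) (conjExp q) 2 P) :
    OpNormLE μ (F.fc m) (conjExp q) q ((∑ k ∈ s, c k) * P ^ 2) := by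
  intro f
  set N := eLpNorm f (ENNReal.ofReal (conjExp q)) μ
  calc eLpNorm (F.fc m f) (ENNReal.ofReal q) μ
      = eLpNorm (⇑(∑ k ∈ s, F.fc (fiberPart φ m k) f)) (ENNReal.ofReal q) μ := by
        rw [F.fc_eq_sum_fiberPart hs, FunLike.coe_sum, Finset.sum_apply]
    _ ≤ ∑ k ∈ s, eLpNorm (F.fc (fiberPart φ m k) f) (ENNReal.ofReal q) μ :=
        Lp.eLpNorm_sum_le (by simpa using hq.le) _ _
    _ ≤ ∑ k ∈ s, ENNReal.ofReal P * (ENNReal.ofReal (c k) * (ENNReal.ofReal P * N)) := by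
        gcongr with k hk
        exact (F.eLpNorm_fc_apply_le hq (fun _ => mem_Icc_of_fiberPart_ne_zero hloc)
          (hcluster k hk) f).trans
          (by gcongr; exact F.enorm_fc_fiberPart_apply_le hloc hbound hc (hcluster k hk) f)
    _ = ENNReal.ofReal ((∑ k ∈ s, c k) * P ^ 2) * N := by
        rw [Finset.sum_mul, ENNReal.ofReal_sum_of_nonneg fun k _ => by have := hc k; positivity,
          Finset.sum_mul]
        refine Finset.sum_congr rfl fun k _ => ?_
        rw [ENNReal.ofReal_mul (hc k), ENNReal.ofReal_pow hP]
        ring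

end Cluster

end BorelFC

def cutoffResolvent (ε lam t : ℝ) : ℂ :=
  (Icc 0 (2 * lam)).indicator 1 t * ((t : ℂ) ^ 2 - ((lam : ℂ) + (ε : ℂ) * I) ^ 2)⁻¹

def resolventWeight (ε lam : ℝ) (k : ℕ) : ℝ :=
  3 * (ε * lam)⁻¹ * ((Nat.dist k ⌊lam / ε⌋₊ : ℝ) + 1)⁻¹

section Resolvent

variable {ε lam : ℝ}

theorem BorelFC.proj_comp_res2_eq_fc_cutoffResolvent (F : BorelFC μ) :
    (F.proj 0 (2 * lam)).comp (F.res2 (((lam : ℂ) + (ε : ℂ) * I) ^ 2)) =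
      F.fc (cutoffResolvent ε lam) :=
  (F.fc_mul _ _).symm

theorem mem_Icc_of_cutoffResolvent_ne_zero {t : ℝ} (ht : cutoffResolvent ε lam t ≠ 0) :
    t ∈ Icc 0 (2 * lam) := by
  by_contra h
  simp [cutoffResolvent, h] at ht

theorem floor_div_mem_range_of_cutoffResolvent_ne_zero (hε : 0 < ε) {t : ℝ}
    (ht : cutoffResolvent ε lam t ≠ 0) : ⌊t / ε⌋₊ ∈ Finset.range (⌊2 * lam / ε⌋₊ + 1) :=
  Finset.mem_range_succ_iff.mpr <| Nat.floor_le_floor <|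
    div_le_div_of_nonneg_right (mem_Icc_of_cutoffResolvent_ne_zero ht).2 hε.le

theorem norm_cutoffResolvent_le (hε : 0 < ε) (hlam : 0 < lam) (t : ℝ) :
    ‖cutoffResolvent ε lam t‖ ≤ resolventWeight ε lam ⌊t / ε⌋₊ := by
  by_cases ht : t ∈ Icc 0 (2 * lam)
  · simp only [cutoffResolvent, indicator_of_mem ht, Pi.one_apply, one_mul]
    exact norm_inv_sq_sub_sq_le hε hlam ht.1
  · simp only [cutoffResolvent, indicator_of_notMem ht, zero_mul, norm_zero, resolventWeight]
    positivity

theorem resolventWeight_nonneg (hε : 0 < ε) (hlam : 0 < lam) (k : ℕ) :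
    0 ≤ resolventWeight ε lam k := by
  unfold resolventWeight
  positivity

theorem sum_resolventWeight_sq_le (ε lam : ℝ) :
    ∑ k ∈ Finset.range (⌊2 * lam / ε⌋₊ + 1), resolventWeight ε lam k ^ 2 ≤ (6 * (ε * lam)⁻¹) ^ 2 :=
  calc ∑ k ∈ Finset.range (⌊2 * lam / ε⌋₊ + 1), resolventWeight ε lam k ^ 2
      = (3 * (ε * lam)⁻¹) ^ 2 *
          ∑ k ∈ Finset.range (⌊2 * lam / ε⌋₊ + 1), (((Nat.dist k ⌊lam / ε⌋₊ : ℝ) + 1)⁻¹) ^ 2 := by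
        simp only [resolventWeight, mul_pow, Finset.mul_sum]
    _ ≤ (3 * (ε * lam)⁻¹) ^ 2 * 4 := by
        gcongr
        refine sum_range_inv_dist_add_one_sq_le (Nat.lt_succ_of_le ?_)
        rw [mul_div_assoc]
        exact Nat.floor_le_floor_two_mul _
    _ = (6 * (ε * lam)⁻¹) ^ 2 := by ring

theorem sum_resolventWeight_le (hε : 0 < ε) (hεlam : ε ≤ lam) :
    ∑ k ∈ Finset.range (⌊2 * lam / ε⌋₊ + 1), resolventWeight ε lam k ≤
      18 * (ε * lam)⁻¹ * Real.log (jb (lam / ε)) := by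
  have hlam : 0 < lam := hε.trans_le hεlam
  have hr : 1 ≤ lam / ε := (one_le_div hε).mpr hεlam
  rw [mul_div_assoc]
  calc ∑ k ∈ Finset.range (⌊2 * (lam / ε)⌋₊ + 1), resolventWeight ε lam k
      = 3 * (ε * lam)⁻¹ *
          ∑ k ∈ Finset.range (⌊2 * (lam / ε)⌋₊ + 1), ((Nat.dist k ⌊lam / ε⌋₊ : ℝ) + 1)⁻¹ := by
        simp only [resolventWeight, Finset.mul_sum]
    _ ≤ 3 * (ε * lam)⁻¹ * (2 * (1 + Real.log ((⌊2 * (lam / ε)⌋₊ + 1 : ℕ) : ℝ))) := by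
        gcongr
        exact sum_range_inv_dist_add_one_le (Nat.lt_succ_of_le (Nat.floor_le_floor_two_mul _))
    _ ≤ 3 * (ε * lam)⁻¹ * (2 * (3 * Real.log (2 + lam / ε))) := by
        gcongr
        exact one_add_log_natFloor_le hr
    _ = 18 * (ε * lam)⁻¹ * Real.log (jb (lam / ε)) := by
        rw [jb, abs_of_pos (by positivity)]
        ring

end Resolvent

/-- **Spectral cluster bounds imply resolvent bounds, with a logarithmic loss**
((3.5) and (3.7) of the paper). There is an absolute constant `C` such that, in any
abstract setting — `Y` a σ-finite measure space, `A` self-adjoint on `L²(Y)` with Borel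
functional calculus `F`, `2 < q < ∞`, resolvents consistently extended `L^{q′} → L²`
and `L^{q′} → L^q` — for all `0 < ε ≤ λ` and every
`P ≥ sup{‖Π_{[εk,ε(k+1)]}‖_{L^{q′}→L²} : 0 ≤ k ≤ 2λ/ε}`:
`‖Π_{[0,2λ]}(A²−(λ+iε)²)⁻¹‖_{L^{q′}→L²} ≤ C(ελ)⁻¹P` and
`‖Π_{[0,2λ]}(A²−(λ+iε)²)⁻¹‖_{L^{q′}→L^q} ≤ C(ελ)⁻¹ ln⟨λ/ε⟩ P²`. -/
theorem cluster_to_resolvent_abstract_log :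
    ∃ C : ℝ, 0 < C ∧
      ∀ (Y : Type) [MeasurableSpace Y] (ν : Measure Y) [SigmaFinite ν]
        (F : BorelFC ν) (q : ℝ), 2 < q → ResolventExtends F q →
        ∀ ε lam : ℝ, 0 < ε → ε ≤ lam →
          ∀ P : ℝ, 0 ≤ P →
            (∀ k : ℕ, (k : ℝ) ≤ 2 * lam / ε →
              OpNormLE ν (F.proj (ε * k) (ε * (k + 1))) (conjExp q) 2 P) →
            OpNormLE ν ((F.proj 0 (2 * lam)).comp
                (F.res2 (((lam : ℂ) + (ε : ℂ) * Complex.I) ^ 2)))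
              (conjExp q) 2 (C * (ε * lam)⁻¹ * P) ∧
            OpNormLE ν ((F.proj 0 (2 * lam)).comp
                (F.res2 (((lam : ℂ) + (ε : ℂ) * Complex.I) ^ 2)))
              (conjExp q) q (C * (ε * lam)⁻¹ * Real.log (jb (lam / ε)) * P ^ 2) := by
  refine ⟨18, by norm_num, fun Y _ ν _ F q hq _ ε lam hε hεlam P hP hcluster => ?_⟩
  have hlam : 0 < lam := hε.trans_le hεlam
  have hs (t : ℝ) (ht : cutoffResolvent ε lam t ≠ 0) :=
    floor_div_mem_range_of_cutoffResolvent_ne_zero hε ht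
  have hloc (t : ℝ) (ht : cutoffResolvent ε lam t ≠ 0) :=
    mem_Icc_mul_floor_div hε (mem_Icc_of_cutoffResolvent_ne_zero ht).1
  have hwindows (k : ℕ) (hk : k ∈ Finset.range (⌊2 * lam / ε⌋₊ + 1)) :
      OpNormLE ν (F.proj (ε * k) (ε * (k + 1))) (conjExp q) 2 P :=
    hcluster k ((Nat.le_floor_iff (by positivity)).mp (Finset.mem_range_succ_iff.mp hk))
  rw [F.proj_comp_res2_eq_fc_cutoffResolvent]
  constructor
  · refine (F.opNormLE_two_of_cluster hs hloc (norm_cutoffResolvent_le hε hlam)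
      (resolventWeight_nonneg hε hlam) hwindows (sum_resolventWeight_sq_le ε lam)
      (by positivity)).mono ?_
    gcongr
    norm_num
  · refine (F.opNormLE_of_cluster (by linarith) hs hloc (norm_cutoffResolvent_le hε hlam)
      (resolventWeight_nonneg hε hlam) hP hwindows).mono ?_
    gcongr
    exact sum_resolventWeight_le hε hεlam
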